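/- arXiv:2509.13082 — 6 statements merged into one kernel-verified Lean document; each statement's English description precedes it below -/
import Mathlib

section
/- (Lemma 1(b)) The projectors P = Σ_{j=1}^d |e_j⟩⟨e_j| ⊗ |e_j⟩⟨e_j| and Q = Σ_{α=1}^d |â_α⟩⟨â_α| ⊗ |ψ_α⟩⟨ψ_α| satisfy PQ = QP = |ψ⟩⟨ψ|; in particular, ψ is the unique joint +1-eigenstate of P and Q. -/
open Matrix Kronecker
open scoped BigOperators ComplexOrder

set_option maxRecDepth 10000

noncomputable section

/-- Standard basis vector `e_j` of `ℂ^d`. -/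
def eVec (d : ℕ) (j : Fin d) : Fin d → ℂ := fun k => if k = j then 1 else 0

/-- Elementary tensor of two vectors in `ℂ^d`. -/
def tensorVec {d : ℕ} (v w : Fin d → ℂ) : Fin d × Fin d → ℂ := fun p => v p.1 * w p.2

/-- Outer product `|v⟩⟨w|`. -/
def outer {n : Type*} (v w : n → ℂ) : Matrix n n ℂ := Matrix.vecMulVec v (star w)

/-- Conjugate (mutually unbiased) basis vectors `â_α`. -/
def ahat (d : ℕ) (phi : Fin d → Fin d → ℝ) (α : Fin d) : Fin d → ℂ :=
  fun j => ((1 / Real.sqrt d : ℝ) : ℂ) * Complex.exp (Complex.I * (phi j α : ℂ))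

/-- The unit vectors `ψ_α = Σ_j √λ_j e^{-iφ(j,α)} e_j`. -/
def psiAlpha (d : ℕ) (lam : Fin d → ℝ) (phi : Fin d → Fin d → ℝ) (α : Fin d) : Fin d → ℂ :=
  fun j => ((Real.sqrt (lam j) : ℝ) : ℂ) * Complex.exp (-Complex.I * (phi j α : ℂ))

/-- The Schmidt-form state `ψ = Σ_j √λ_j e_j ⊗ e_j` in `ℂ^d ⊗ ℂ^d`. -/
def psiVec (d : ℕ) (lam : Fin d → ℝ) : Fin d × Fin d → ℂ :=
  ∑ j, ((Real.sqrt (lam j) : ℝ) : ℂ) • tensorVec (eVec d j) (eVec d j)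

/-- The projector `P = Σ_j |e_j⟩⟨e_j| ⊗ |e_j⟩⟨e_j|`. -/
def Pop (d : ℕ) : Matrix (Fin d × Fin d) (Fin d × Fin d) ℂ :=
  ∑ j, (outer (eVec d j) (eVec d j)) ⊗ₖ (outer (eVec d j) (eVec d j))

/-- The projector `Q = Σ_α |â_α⟩⟨â_α| ⊗ |ψ_α⟩⟨ψ_α|`. -/
def Qop (d : ℕ) (lam : Fin d → ℝ) (phi : Fin d → Fin d → ℝ) :
    Matrix (Fin d × Fin d) (Fin d × Fin d) ℂ :=
  ∑ α, (outer (ahat d phi α) (ahat d phi α)) ⊗ₖ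
      (outer (psiAlpha d lam phi α) (psiAlpha d lam phi α))

lemma psiVec_apply (d : ℕ) (lam : Fin d → ℝ) (p : Fin d × Fin d) :
    psiVec d lam p = if p.1 = p.2 then ((Real.sqrt (lam p.1) : ℝ) : ℂ) else 0 := by
  have h : ∀ x : Fin d,
      ((Real.sqrt (lam x) : ℝ) : ℂ) • tensorVec (eVec d x) (eVec d x) p
        = if x = p.1 then (if p.1 = p.2 then ((Real.sqrt (lam p.1) : ℝ) : ℂ) else 0) else 0 := by
    intro x
    simp only [tensorVec, eVec, smul_eq_mul]
    split_ifs <;> subst_vars <;> simp_all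
  simp only [psiVec, Finset.sum_apply, Pi.smul_apply]
  simp_rw [h]
  rw [Finset.sum_ite_eq' Finset.univ p.1]
  simp

lemma Pop_apply (d : ℕ) (p q : Fin d × Fin d) :
    Pop d p q = if p.1 = p.2 ∧ q.1 = p.1 ∧ q.2 = p.1 then 1 else 0 := by
  have h : ∀ x : Fin d,
      (outer (eVec d x) (eVec d x) ⊗ₖ outer (eVec d x) (eVec d x)) p q
        = if x = p.1 then (if p.1 = p.2 ∧ q.1 = p.1 ∧ q.2 = p.1 then 1 else 0) else 0 := by
    intro x
    simp only [outer, vecMulVec_apply, kroneckerMap_apply, eVec, Pi.star_apply,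
      apply_ite (star : ℂ → ℂ), star_one, star_zero]
    split_ifs <;> subst_vars <;> simp_all
  simp only [Pop, Matrix.sum_apply]
  simp_rw [h]
  rw [Finset.sum_ite_eq' Finset.univ p.1]
  simp

lemma Qop_apply (d : ℕ) (lam : Fin d → ℝ) (phi : Fin d → Fin d → ℝ) (p q : Fin d × Fin d) :
    Qop d lam phi p q = ∑ α, (ahat d phi α p.1 * star (ahat d phi α q.1)) *
      (psiAlpha d lam phi α p.2 * star (psiAlpha d lam phi α q.2)) := by
  simp only [Qop, Matrix.sum_apply, outer, vecMulVec_apply, kroneckerMap_apply, Pi.star_apply]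

lemma star_ahat (d : ℕ) (phi : Fin d → Fin d → ℝ) (α b : Fin d) :
    star (ahat d phi α b)
      = ((1 / Real.sqrt d : ℝ) : ℂ) * Complex.exp (-(Complex.I * (phi b α : ℂ))) := by
  simp [ahat, ← Complex.exp_conj, Complex.conj_I, _root_.map_mul, Complex.conj_ofReal, neg_mul]

lemma star_psiAlpha (d : ℕ) (lam : Fin d → ℝ) (phi : Fin d → Fin d → ℝ) (α b : Fin d) :
    star (psiAlpha d lam phi α b)
      = ((Real.sqrt (lam b) : ℝ) : ℂ) * Complex.exp (Complex.I * (phi b α : ℂ)) := by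
  simp [psiAlpha, ← Complex.exp_conj, Complex.conj_I, _root_.map_mul, Complex.conj_ofReal, neg_mul]

lemma four_exp (w x y z : ℂ) :
    Complex.exp w * Complex.exp x * Complex.exp y * Complex.exp z
      = Complex.exp (w + x + y + z) := by
  rw [← Complex.exp_add, ← Complex.exp_add, ← Complex.exp_add]

lemma term1 (d : ℕ) (lam : Fin d → ℝ) (phi : Fin d → Fin d → ℝ) (α a b c : Fin d) :
    (ahat d phi α a * star (ahat d phi α b)) *
      (psiAlpha d lam phi α a * star (psiAlpha d lam phi α c))
    = ((Real.sqrt (lam a) * Real.sqrt (lam c) : ℝ) : ℂ) *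
        (ahat d phi α c * star (ahat d phi α b)) := by
  rw [star_ahat, star_psiAlpha]
  simp only [ahat, psiAlpha, neg_mul]
  trans (((1 / Real.sqrt d : ℝ) : ℂ) * ((1 / Real.sqrt d : ℝ) : ℂ) *
      ((Real.sqrt (lam a) : ℝ) : ℂ) * ((Real.sqrt (lam c) : ℝ) : ℂ)) *
      Complex.exp (Complex.I * (phi a α : ℂ) + -(Complex.I * (phi b α : ℂ)) +
        -(Complex.I * (phi a α : ℂ)) + Complex.I * (phi c α : ℂ))
  · rw [← four_exp]; ring
  · rw [show Complex.I * (phi a α : ℂ) + -(Complex.I * (phi b α : ℂ)) +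
        -(Complex.I * (phi a α : ℂ)) + Complex.I * (phi c α : ℂ)
        = Complex.I * (phi c α : ℂ) + -(Complex.I * (phi b α : ℂ)) by ring,
      Complex.exp_add]
    push_cast; ring

lemma term2 (d : ℕ) (lam : Fin d → ℝ) (phi : Fin d → Fin d → ℝ) (α a b c : Fin d) :
    (ahat d phi α a * star (ahat d phi α b)) *
      (psiAlpha d lam phi α c * star (psiAlpha d lam phi α b))
    = ((Real.sqrt (lam c) * Real.sqrt (lam b) : ℝ) : ℂ) *
        (ahat d phi α a * star (ahat d phi α c)) := by
  rw [star_ahat, star_ahat, star_psiAlpha]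
  simp only [ahat, psiAlpha, neg_mul]
  trans (((1 / Real.sqrt d : ℝ) : ℂ) * ((1 / Real.sqrt d : ℝ) : ℂ) *
      ((Real.sqrt (lam c) : ℝ) : ℂ) * ((Real.sqrt (lam b) : ℝ) : ℂ)) *
      Complex.exp (Complex.I * (phi a α : ℂ) + -(Complex.I * (phi b α : ℂ)) +
        -(Complex.I * (phi c α : ℂ)) + Complex.I * (phi b α : ℂ))
  · rw [← four_exp]; ring
  · rw [show Complex.I * (phi a α : ℂ) + -(Complex.I * (phi b α : ℂ)) +
        -(Complex.I * (phi c α : ℂ)) + Complex.I * (phi b α : ℂ)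
        = Complex.I * (phi a α : ℂ) + -(Complex.I * (phi c α : ℂ)) by ring,
      Complex.exp_add]
    push_cast; ring

lemma hrow (d : ℕ) (phi : Fin d → Fin d → ℝ)
    (hMUB : ∀ α β : Fin d,
      star (ahat d phi α) ⬝ᵥ ahat d phi β = if α = β then 1 else 0) (a b : Fin d) :
    ∑ α, ahat d phi α a * star (ahat d phi α b) = if a = b then 1 else 0 := by
  set A : Matrix (Fin d) (Fin d) ℂ := Matrix.of fun j α => ahat d phi α j with hA
  have hA1 : Aᴴ * A = 1 := by
    ext α β
    have := hMUB α β
    simpa [Matrix.mul_apply, Matrix.conjTranspose_apply, dotProduct, hA,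
      Matrix.one_apply] using this
  have hA2 : A * Aᴴ = 1 := mul_eq_one_comm.mp hA1
  have h := Matrix.ext_iff.mpr hA2 a b
  simpa [Matrix.mul_apply, Matrix.conjTranspose_apply, hA, Matrix.one_apply] using h

/-- Lemma 1(b): `PQ = QP = |ψ⟩⟨ψ|`; in particular `ψ` is the unique
joint `+1`-eigenstate of `P` and `Q`. -/
theorem stmt3 (d : ℕ) (hd : 1 ≤ d) (lam : Fin d → ℝ)
    (hlam : ∀ j, 0 ≤ lam j) (hsum : ∑ j, lam j = 1)
    (phi : Fin d → Fin d → ℝ)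
    (hMUB : ∀ α β : Fin d,
      star (ahat d phi α) ⬝ᵥ ahat d phi β = if α = β then 1 else 0) :
    Pop d * Qop d lam phi = outer (psiVec d lam) (psiVec d lam) ∧
    Qop d lam phi * Pop d = outer (psiVec d lam) (psiVec d lam) ∧
    (∀ v : Fin d × Fin d → ℂ,
      (Pop d).mulVec v = v → (Qop d lam phi).mulVec v = v →
      ∃ c : ℂ, v = c • psiVec d lam) := by
  have hrw := hrow d phi hMUB
  have houter : ∀ p q : Fin d × Fin d, outer (psiVec d lam) (psiVec d lam) p q
      = (if p.1 = p.2 then ((Real.sqrt (lam p.1) : ℝ) : ℂ) else 0) *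
        (if q.1 = q.2 then ((Real.sqrt (lam q.1) : ℝ) : ℂ) else 0) := by
    intro p q
    rw [outer, vecMulVec_apply, Pi.star_apply, psiVec_apply, psiVec_apply]
    split_ifs <;> simp [Complex.conj_ofReal]
  have hPQ : Pop d * Qop d lam phi = outer (psiVec d lam) (psiVec d lam) := by
    ext p q
    rw [Matrix.mul_apply]
    have key : ∀ x : Fin d × Fin d, Pop d p x * Qop d lam phi x q
        = if x = (p.1, p.1) then
            (if p.1 = p.2 then Qop d lam phi (p.1, p.1) q else 0) else 0 := by
      intro x
      rw [Pop_apply]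
      by_cases hx : x = (p.1, p.1)
      · subst hx; by_cases hp : p.1 = p.2 <;> simp [hp]
      · have hc : ¬(p.1 = p.2 ∧ x.1 = p.1 ∧ x.2 = p.1) := by
          rintro ⟨-, h1, h2⟩; exact hx (Prod.ext_iff.mpr ⟨h1, h2⟩)
        simp [hx, hc]
    rw [Finset.sum_congr rfl (fun x _ => key x),
      Finset.sum_ite_eq' Finset.univ ((p.1, p.1) : Fin d × Fin d)]
    have hQ11 : Qop d lam phi (p.1, p.1) q
        = ((Real.sqrt (lam p.1) * Real.sqrt (lam q.2) : ℝ) : ℂ) *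
          (if q.2 = q.1 then 1 else 0) := by
      rw [Qop_apply]
      have : ∀ α : Fin d, (ahat d phi α p.1 * star (ahat d phi α q.1)) *
          (psiAlpha d lam phi α p.1 * star (psiAlpha d lam phi α q.2))
          = ((Real.sqrt (lam p.1) * Real.sqrt (lam q.2) : ℝ) : ℂ) *
            (ahat d phi α q.2 * star (ahat d phi α q.1)) := fun α =>
        term1 d lam phi α p.1 q.1 q.2
      rw [Finset.sum_congr rfl (fun α _ => this α), ← Finset.mul_sum, hrw q.2 q.1]
    rw [houter]
    simp only [Finset.mem_univ, if_true, hQ11]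
    by_cases h1 : p.1 = p.2 <;> by_cases h2 : q.1 = q.2
    · rw [if_pos h1, if_pos h1, if_pos h2, if_pos h2.symm, mul_one]
      push_cast; rw [h2]
    · rw [if_pos h1, if_pos h1, if_neg h2, if_neg (fun h => h2 h.symm), mul_zero, mul_zero]
    · rw [if_neg h1, if_neg h1, zero_mul]
    · rw [if_neg h1, if_neg h1, zero_mul]
  have hQP : Qop d lam phi * Pop d = outer (psiVec d lam) (psiVec d lam) := by
    ext p q
    rw [Matrix.mul_apply]
    have key : ∀ x : Fin d × Fin d, Qop d lam phi p x * Pop d x q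
        = if x = (q.1, q.1) then
            (if q.2 = q.1 then Qop d lam phi p (q.1, q.1) else 0) else 0 := by
      intro x
      rw [Pop_apply]
      by_cases hx : x = (q.1, q.1)
      · subst hx; by_cases hq : q.2 = q.1 <;> simp [hq]
      · have hc : ¬(x.1 = x.2 ∧ q.1 = x.1 ∧ q.2 = x.1) := by
          rintro ⟨h1, h2, h3⟩; exact hx (Prod.ext_iff.mpr ⟨h2.symm, h1.symm.trans h2.symm⟩)
        simp [hx, hc]
    rw [Finset.sum_congr rfl (fun x _ => key x),
      Finset.sum_ite_eq' Finset.univ ((q.1, q.1) : Fin d × Fin d)]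
    have hQ11 : Qop d lam phi p (q.1, q.1)
        = ((Real.sqrt (lam p.2) * Real.sqrt (lam q.1) : ℝ) : ℂ) *
          (if p.1 = p.2 then 1 else 0) := by
      rw [Qop_apply]
      have : ∀ α : Fin d, (ahat d phi α p.1 * star (ahat d phi α q.1)) *
          (psiAlpha d lam phi α p.2 * star (psiAlpha d lam phi α q.1))
          = ((Real.sqrt (lam p.2) * Real.sqrt (lam q.1) : ℝ) : ℂ) *
            (ahat d phi α p.1 * star (ahat d phi α p.2)) := fun α =>
        term2 d lam phi α p.1 q.1 p.2
      rw [Finset.sum_congr rfl (fun α _ => this α), ← Finset.mul_sum, hrw p.1 p.2]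
    rw [houter]
    simp only [Finset.mem_univ, if_true, hQ11]
    by_cases h1 : p.1 = p.2 <;> by_cases h2 : q.1 = q.2
    · rw [if_pos h2.symm, if_pos h1, if_pos h1, if_pos h2, mul_one]
      rw [h1, h2]; push_cast; ring
    · rw [if_neg (fun h => h2 h.symm), if_neg h2, mul_zero]
    · rw [if_pos h2.symm, if_neg h1, mul_zero, if_neg h1, zero_mul]
    · rw [if_neg (fun h => h2 h.symm), if_neg h1, zero_mul]
  refine ⟨hPQ, hQP, fun v hPv hQv => ?_⟩
  have hv : (outer (psiVec d lam) (psiVec d lam)).mulVec v = v := by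
    rw [← hPQ, ← Matrix.mulVec_mulVec, hQv, hPv]
  refine ⟨star (psiVec d lam) ⬝ᵥ v, ?_⟩
  funext i
  have h := congrFun hv i
  rw [← h]
  simp only [Matrix.mulVec, dotProduct, outer, vecMulVec_apply, Pi.smul_apply,
    smul_eq_mul, Pi.star_apply, Finset.sum_mul]
  exact Finset.sum_congr rfl fun j _ => by ring
end
end

section
/- (Theorem 1, operator form) With P = Σ_{j=1}^d |e_j⟩⟨e_j| ⊗ |e_j⟩⟨e_j| and Q = Σ_{α=1}^d |â_α⟩⟨â_α| ⊗ |ψ_α⟩⟨ψ_α|, one has the operator inequality 𝟙 − |ψ⟩⟨ψ| ≤ (𝟙 − P) + (𝟙 − Q) in the Loewner (positive semidefinite) order on operators on ℂ^d ⊗ ℂ^d. -/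
open Matrix Kronecker
open scoped BigOperators ComplexOrder

noncomputable section

/-!
`P` and `Q` are orthogonal projections: the vectors `e_j ⊗ e_j`, and likewise the vectors
`â_α ⊗ ψ_α`, are orthonormal. Moreover `P (â_α ⊗ ψ_α) = ψ / √d` for every `α`, and
`(1/√d) Σ_α â_α ⊗ ψ_α = ψ` by completeness of the basis `(â_α)`, so `P Q = |ψ⟩⟨ψ|`. This is
self-adjoint, hence `P` and `Q` commute, and then
`(𝟙 − P) + (𝟙 − Q) − (𝟙 − P Q) = (𝟙 − P)(𝟙 − Q)` is itself a projection, hence positive.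
-/

open scoped MatrixOrder ComplexConjugate

theorem IsStarProjection.one_sub_mul_le_one_sub_add_one_sub {R : Type*} [Ring R] [PartialOrder R]
    [StarRing R] [StarOrderedRing R] {p q : R} (hp : IsStarProjection p)
    (hq : IsStarProjection q) (hpq : Commute p q) :
    1 - p * q ≤ (1 - p) + (1 - q) := by
  have h := (hp.one_sub.mul hq.one_sub
    ((Commute.one_left _).sub_left ((Commute.one_right p).sub_right hpq))).nonneg
  rw [← sub_nonneg]
  convert h using 1
  noncomm_ring

theorem sum_mul_conj_eq_ite_of_orthonormal {ι : Type*} [Fintype ι] [DecidableEq ι]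
    (u : ι → ι → ℂ) (hu : ∀ α β, star (u α) ⬝ᵥ u β = if α = β then 1 else 0) (j k : ι) :
    ∑ α, u α j * conj (u α k) = if j = k then 1 else 0 := by
  set U : Matrix ι ι ℂ := Matrix.of fun j α => u α j
  have hU : Uᴴ * U = 1 := by
    ext α β
    simpa [U, mul_apply, dotProduct, one_apply] using hu α β
  have hU' : U * Uᴴ = 1 := mul_eq_one_comm.mp hU
  simpa [U, mul_apply, one_apply] using congrFun (congrFun hU' j) k

section Outer

variable {n : Type*}

lemma conjTranspose_outer (v w : n → ℂ) : (outer v w)ᴴ = outer w v := by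
  rw [outer, conjTranspose_vecMulVec, star_star, outer]

lemma outer_smul_left (c : ℂ) (v w : n → ℂ) : outer (c • v) w = c • outer v w :=
  smul_vecMulVec c v (star w)

lemma outer_ofReal_smul_right (r : ℝ) (v w : n → ℂ) :
    outer v ((r : ℂ) • w) = (r : ℂ) • outer v w := by
  simp only [outer, star_smul, Complex.star_def, Complex.conj_ofReal, vecMulVec_smul]

lemma sum_outer_right {ι : Type*} (s : Finset ι) (v : n → ℂ) (w : ι → n → ℂ) :
    ∑ i ∈ s, outer v (w i) = outer v (∑ i ∈ s, w i) := by
  ext a b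
  simp [outer, vecMulVec_apply, Matrix.sum_apply, Finset.mul_sum]

variable [Fintype n]

lemma outer_mul_outer (v w x y : n → ℂ) :
    outer v w * outer x y = (star w ⬝ᵥ x) • outer v y := by
  rw [outer, outer, vecMulVec_mul_vecMulVec, outer, vecMulVec_smul]

lemma mul_outer (A : Matrix n n ℂ) (v w : n → ℂ) : A * outer v w = outer (A *ᵥ v) w :=
  mul_vecMulVec A v (star w)

lemma outer_mulVec (v w x : n → ℂ) : outer v w *ᵥ x = (star w ⬝ᵥ x) • v := by
  rw [outer, vecMulVec_mulVec, op_smul_eq_smul]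

theorem isStarProjection_sum_outer {ι : Type*} [Fintype ι] [DecidableEq ι] (v : ι → n → ℂ)
    (hv : ∀ i j, star (v i) ⬝ᵥ v j = if i = j then 1 else 0) :
    IsStarProjection (∑ i, outer (v i) (v i)) where
  isSelfAdjoint := by
    simp only [IsSelfAdjoint, star_eq_conjTranspose, conjTranspose_sum, conjTranspose_outer]
  isIdempotentElem := by
    simp only [IsIdempotentElem, Finset.sum_mul_sum, outer_mul_outer, hv, ite_smul, one_smul,
      zero_smul, Finset.sum_ite_eq, Finset.mem_univ, if_true]

end Outer

section Tensor

variable {d : ℕ}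

lemma outer_tensorVec (v w x y : Fin d → ℂ) :
    outer (tensorVec v w) (tensorVec x y) = outer v x ⊗ₖ outer w y := by
  ext ⟨i, i'⟩ ⟨j, j'⟩
  simp only [outer, tensorVec, vecMulVec_apply, Pi.star_apply, star_mul', kroneckerMap_apply]
  ring

lemma star_tensorVec_dotProduct (a b c e : Fin d → ℂ) :
    star (tensorVec a b) ⬝ᵥ tensorVec c e = (star a ⬝ᵥ c) * (star b ⬝ᵥ e) := by
  simp only [dotProduct, Fintype.sum_prod_type, Finset.sum_mul_sum, tensorVec, Pi.star_apply,
    star_mul']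
  exact Finset.sum_congr rfl fun _ _ => Finset.sum_congr rfl fun _ _ => by ring

lemma eVec_eq_single (j : Fin d) : eVec d j = Pi.single j 1 := by
  ext k
  simp [eVec, Pi.single_apply]

end Tensor

section Phases

open Complex

lemma exp_I_mul_mul_exp_neg_I_mul (x : ℂ) : exp (I * x) * exp (-I * x) = 1 := by
  rw [← exp_add, ← add_mul, add_neg_cancel, zero_mul, exp_zero]

variable {d : ℕ} (lam : Fin d → ℝ) (phi : Fin d → Fin d → ℝ)

lemma conj_ahat (α j : Fin d) :
    conj (ahat d phi α j) = ((1 / Real.sqrt d : ℝ) : ℂ) * exp (-I * phi j α) := by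
  simp only [ahat, map_mul, conj_ofReal, ← exp_conj, conj_I, neg_mul]

lemma conj_psiAlpha (α j : Fin d) :
    conj (psiAlpha d lam phi α j) = ((Real.sqrt (lam j) : ℝ) : ℂ) * exp (I * phi j α) := by
  simp only [psiAlpha, map_mul, conj_ofReal, ← exp_conj, map_neg, conj_I, neg_neg]

lemma ahat_mul_psiAlpha (α j : Fin d) :
    ahat d phi α j * psiAlpha d lam phi α j
      = ((1 / Real.sqrt d : ℝ) : ℂ) * ((Real.sqrt (lam j) : ℝ) : ℂ) := by
  rw [ahat, psiAlpha]
  linear_combination (((1 / Real.sqrt d : ℝ) : ℂ) * ((Real.sqrt (lam j) : ℝ) : ℂ))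
    * exp_I_mul_mul_exp_neg_I_mul (phi j α)

lemma inv_sqrt_mul_psiAlpha (α j : Fin d) :
    ((1 / Real.sqrt d : ℝ) : ℂ) * psiAlpha d lam phi α j
      = ((Real.sqrt (lam j) : ℝ) : ℂ) * conj (ahat d phi α j) := by
  rw [conj_ahat, psiAlpha]
  ring

lemma star_psiAlpha_dotProduct_self (hlam : ∀ j, 0 ≤ lam j) (hsum : ∑ j, lam j = 1)
    (α : Fin d) : star (psiAlpha d lam phi α) ⬝ᵥ psiAlpha d lam phi α = 1 := by
  have hterm (j : Fin d) :
      star (psiAlpha d lam phi α) j * psiAlpha d lam phi α j = (lam j : ℂ) := by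
    rw [Pi.star_apply, RCLike.star_def, conj_psiAlpha, psiAlpha]
    have hsq : ((Real.sqrt (lam j) : ℝ) : ℂ) * ((Real.sqrt (lam j) : ℝ) : ℂ) = (lam j : ℂ) := by
      exact_mod_cast Real.mul_self_sqrt (hlam j)
    linear_combination (((Real.sqrt (lam j) : ℝ) : ℂ) * ((Real.sqrt (lam j) : ℝ) : ℂ))
      * exp_I_mul_mul_exp_neg_I_mul (phi j α) + hsq
  simp only [dotProduct, hterm]
  exact_mod_cast hsum

end Phases

lemma Pop_eq_sum_outer (d : ℕ) :
    Pop d = ∑ j, outer (tensorVec (eVec d j) (eVec d j)) (tensorVec (eVec d j) (eVec d j)) := by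
  simp only [Pop, outer_tensorVec]

theorem isStarProjection_Pop (d : ℕ) : IsStarProjection (Pop d) := by
  rw [Pop_eq_sum_outer]
  refine isStarProjection_sum_outer _ fun j k => ?_
  by_cases h : j = k <;> simp [star_tensorVec_dotProduct, eVec_eq_single, h]

section Operators

variable {d : ℕ} (lam : Fin d → ℝ) (phi : Fin d → Fin d → ℝ)

lemma Qop_eq_sum_outer :
    Qop d lam phi = ∑ α, outer (tensorVec (ahat d phi α) (psiAlpha d lam phi α))
      (tensorVec (ahat d phi α) (psiAlpha d lam phi α)) := by
  simp only [Qop, outer_tensorVec]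

theorem isStarProjection_Qop (hlam : ∀ j, 0 ≤ lam j) (hsum : ∑ j, lam j = 1)
    (hMUB : ∀ α β : Fin d, star (ahat d phi α) ⬝ᵥ ahat d phi β = if α = β then 1 else 0) :
    IsStarProjection (Qop d lam phi) := by
  rw [Qop_eq_sum_outer]
  refine isStarProjection_sum_outer _ fun α β => ?_
  rw [star_tensorVec_dotProduct, hMUB]
  split_ifs with h
  · rw [h, star_psiAlpha_dotProduct_self lam phi hlam hsum, one_mul]
  · rw [zero_mul]

lemma Pop_mulVec_tensorVec (α : Fin d) :
    Pop d *ᵥ tensorVec (ahat d phi α) (psiAlpha d lam phi α)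
      = ((1 / Real.sqrt d : ℝ) : ℂ) • psiVec d lam := by
  simp only [Pop_eq_sum_outer, Matrix.sum_mulVec, outer_mulVec, star_tensorVec_dotProduct,
    eVec_eq_single, ← Pi.single_star, star_one, single_one_dotProduct, ahat_mul_psiAlpha, psiVec,
    Finset.smul_sum, smul_smul]

lemma sum_smul_tensorVec_ahat_psiAlpha
    (hMUB : ∀ α β : Fin d, star (ahat d phi α) ⬝ᵥ ahat d phi β = if α = β then 1 else 0) :
    ∑ α, ((1 / Real.sqrt d : ℝ) : ℂ) • tensorVec (ahat d phi α) (psiAlpha d lam phi α)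
      = psiVec d lam := by
  ext ⟨k, l⟩
  have hcomplete := sum_mul_conj_eq_ite_of_orthonormal (fun α => ahat d phi α) hMUB k l
  have hterm (α : Fin d) : ((1 / Real.sqrt d : ℝ) : ℂ) * (ahat d phi α k * psiAlpha d lam phi α l)
      = ((Real.sqrt (lam l) : ℝ) : ℂ) * (ahat d phi α k * conj (ahat d phi α l)) := by
    rw [mul_left_comm, inv_sqrt_mul_psiAlpha]
    ring
  simp only [Finset.sum_apply, Pi.smul_apply, smul_eq_mul, tensorVec, hterm, ← Finset.mul_sum,
    hcomplete, psiVec, eVec]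
  split_ifs with h <;> simp [h]

theorem Pop_mul_Qop
    (hMUB : ∀ α β : Fin d, star (ahat d phi α) ⬝ᵥ ahat d phi β = if α = β then 1 else 0) :
    Pop d * Qop d lam phi = outer (psiVec d lam) (psiVec d lam) := by
  simp only [Qop_eq_sum_outer, Finset.mul_sum, mul_outer, Pop_mulVec_tensorVec, outer_smul_left,
    ← outer_ofReal_smul_right, sum_outer_right, sum_smul_tensorVec_ahat_psiAlpha lam phi hMUB]

end Operators

theorem stmt5_general (d : ℕ) (lam : Fin d → ℝ)
    (hlam : ∀ j, 0 ≤ lam j) (hsum : ∑ j, lam j = 1)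
    (phi : Fin d → Fin d → ℝ)
    (hMUB : ∀ α β : Fin d,
      star (ahat d phi α) ⬝ᵥ ahat d phi β = if α = β then 1 else 0) :
    (((1 - Pop d) + (1 - Qop d lam phi))
        - (1 - outer (psiVec d lam) (psiVec d lam))).PosSemidef := by
  have hP := isStarProjection_Pop d
  have hQ := isStarProjection_Qop lam phi hlam hsum hMUB
  have hPQ := Pop_mul_Qop lam phi hMUB
  have hcomm : Commute (Pop d) (Qop d lam phi) := by
    rw [IsSelfAdjoint.commute_iff hP.isSelfAdjoint hQ.isSelfAdjoint, hPQ]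
    exact conjTranspose_outer _ _
  have hle := hP.one_sub_mul_le_one_sub_add_one_sub hQ hcomm
  rwa [hPQ, Matrix.le_iff] at hle

/-- Theorem 1, operator form:
`𝟙 − |ψ⟩⟨ψ| ≤ (𝟙 − P) + (𝟙 − Q)` in the Loewner order. -/
theorem stmt5 (d : ℕ) (hd : 1 ≤ d) (lam : Fin d → ℝ)
    (hlam : ∀ j, 0 ≤ lam j) (hsum : ∑ j, lam j = 1)
    (phi : Fin d → Fin d → ℝ)
    (hMUB : ∀ α β : Fin d,
      star (ahat d phi α) ⬝ᵥ ahat d phi β = if α = β then 1 else 0) :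
    (((1 - Pop d) + (1 - Qop d lam phi))
        - (1 - outer (psiVec d lam) (psiVec d lam))).PosSemidef :=
  stmt5_general d lam hlam hsum phi hMUB
end
end

section
/- (Theorem 2, operator form, abstract version) Let P⁽⁰⁾, P⁽¹⁾, P⁽⁰⁰⁾, P⁽⁰¹⁾, P⁽¹⁰⁾, P⁽¹¹⁾ be orthogonal projections on a finite-dimensional complex Hilbert space and ψ a unit vector, such that P⁽⁰⁾P⁽¹⁾ = P⁽¹⁾P⁽⁰⁾ = |ψ⟩⟨ψ|, and for each a ∈ {0,1}: P⁽ᵃ⁰⁾P⁽ᵃ¹⁾ = P⁽ᵃ¹⁾P⁽ᵃ⁰⁾ = P⁽ᵃ⁾. Then |ψ⟩⟨ψ| = P⁽⁰⁰⁾P⁽⁰¹⁾P⁽¹⁰⁾P⁽¹¹⁾, and 𝟙 − |ψ⟩⟨ψ| ≤ Σ_{a,b ∈ {0,1}} (𝟙 − P⁽ᵃᵇ⁾) in the Loewner order. -/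
open Matrix
open scoped BigOperators ComplexOrder

noncomputable section

/-- The product of two commuting complementary projections is PSD. -/
lemma aux_psd {n : Type*} [Fintype n] [DecidableEq n]
    (P Q R : Matrix n n ℂ) (hP : Pᴴ = P) (hPi : P * P = P)
    (hQ : Qᴴ = Q) (hQi : Q * Q = Q)
    (ha : P * Q = R) (hb : Q * P = R) :
    ((1 - P) * (1 - Q)).PosSemidef := by
  have hA : (1 - P) * (1 - Q) = 1 - P - Q + R := by
    rw [← ha]; noncomm_ring
  have hherm : ((1 - P) * (1 - Q))ᴴ = (1 - P) * (1 - Q) := by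
    rw [hA]
    have hR : Rᴴ = R := by
      rw [← ha, conjTranspose_mul, hP, hQ, hb, ha]
    simp only [conjTranspose_add, conjTranspose_sub, conjTranspose_one, hP, hQ, hR]
  have hPR : P * R = R := by rw [← ha, ← mul_assoc, hPi]
  have hRP : R * P = R := by rw [← hb, mul_assoc, hPi]
  have hQR : Q * R = R := by rw [← hb, ← mul_assoc, hQi]
  have hRQ : R * Q = R := by rw [← ha, mul_assoc, hQi]
  have hRR : R * R = R := by
    nth_rewrite 1 [← ha]
    rw [mul_assoc, hQR, hPR]
  have hidem : ((1 - P) * (1 - Q)) * ((1 - P) * (1 - Q)) = (1 - P) * (1 - Q) := by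
    rw [hA]
    have : (1 - P - Q + R) * (1 - P - Q + R) =
        1 - P - Q + R - (P - (P*P) - (P*Q) + (P*R))
          - (Q - (Q*P) - (Q*Q) + (Q*R)) + (R - (R*P) - (R*Q) + (R*R)) := by
      noncomm_ring
    rw [this, hPi, hQi, ha, hb, hPR, hRP, hQR, hRQ, hRR]
    noncomm_ring
  have : (1 - P) * (1 - Q) = ((1 - P) * (1 - Q))ᴴ * ((1 - P) * (1 - Q)) := by
    rw [hherm, hidem]
  rw [this]
  exact Matrix.posSemidef_conjTranspose_mul_self _

/-- Theorem 2, operator form, abstract version: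
if `P⁽⁰⁾P⁽¹⁾ = P⁽¹⁾P⁽⁰⁾ = |ψ⟩⟨ψ|` and `P⁽ᵃ⁰⁾P⁽ᵃ¹⁾ = P⁽ᵃ¹⁾P⁽ᵃ⁰⁾ = P⁽ᵃ⁾` for `a ∈ {0,1}`,
then `|ψ⟩⟨ψ| = P⁽⁰⁰⁾P⁽⁰¹⁾P⁽¹⁰⁾P⁽¹¹⁾` and
`𝟙 − |ψ⟩⟨ψ| ≤ Σ_{a,b} (𝟙 − P⁽ᵃᵇ⁾)` in the Loewner order. -/
theorem stmt11 {n : Type*} [Fintype n] [DecidableEq n]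
    (P0 P1 P00 P01 P10 P11 : Matrix n n ℂ) (ψ : n → ℂ)
    (hψ : star ψ ⬝ᵥ ψ = 1)
    (hP0 : P0ᴴ = P0) (hP0i : P0 * P0 = P0)
    (hP1 : P1ᴴ = P1) (hP1i : P1 * P1 = P1)
    (hP00 : P00ᴴ = P00) (hP00i : P00 * P00 = P00)
    (hP01 : P01ᴴ = P01) (hP01i : P01 * P01 = P01)
    (hP10 : P10ᴴ = P10) (hP10i : P10 * P10 = P10)
    (hP11 : P11ᴴ = P11) (hP11i : P11 * P11 = P11)
    (h01 : P0 * P1 = outer ψ ψ) (h10 : P1 * P0 = outer ψ ψ)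
    (h0a : P00 * P01 = P0) (h0b : P01 * P00 = P0)
    (h1a : P10 * P11 = P1) (h1b : P11 * P10 = P1) :
    outer ψ ψ = P00 * P01 * P10 * P11 ∧
    (((1 - P00) + (1 - P01) + (1 - P10) + (1 - P11)) - (1 - outer ψ ψ)).PosSemidef := by
  constructor
  · rw [← h01, ← h0a, ← h1a]; noncomm_ring
  · have key : ((1 - P00) + (1 - P01) + (1 - P10) + (1 - P11)) - (1 - outer ψ ψ)
        = (1 - P00) * (1 - P01) + (1 - P10) * (1 - P11) + (1 - P0) * (1 - P1) := by
      have e0 : (1 - P00) * (1 - P01) = 1 - P00 - P01 + P0 := by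
        rw [← h0a]; noncomm_ring
      have e1 : (1 - P10) * (1 - P11) = 1 - P10 - P11 + P1 := by
        rw [← h1a]; noncomm_ring
      have e2 : (1 - P0) * (1 - P1) = 1 - P0 - P1 + outer ψ ψ := by
        rw [← h01]; noncomm_ring
      rw [e0, e1, e2]; noncomm_ring
    rw [key]
    exact ((aux_psd P00 P01 P0 hP00 hP00i hP01 hP01i h0a h0b).add
      (aux_psd P10 P11 P1 hP10 hP10i hP11 hP11i h1a h1b)).add
      (aux_psd P0 P1 (outer ψ ψ) hP0 hP0i hP1 hP1i h01 h10)
end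
end

section
/- (Theorem 2, fidelity form, abstract version) Let P⁽⁰⁾, P⁽¹⁾, P⁽⁰⁰⁾, P⁽⁰¹⁾, P⁽¹⁰⁾, P⁽¹¹⁾ be orthogonal projections on a finite-dimensional complex Hilbert space and ψ a unit vector, such that P⁽⁰⁾P⁽¹⁾ = P⁽¹⁾P⁽⁰⁾ = |ψ⟩⟨ψ|, and for each a ∈ {0,1}: P⁽ᵃ⁰⁾P⁽ᵃ¹⁾ = P⁽ᵃ¹⁾P⁽ᵃ⁰⁾ = P⁽ᵃ⁾. Then for every density operator ρ (positive semidefinite with trace 1), tr(ρ |ψ⟩⟨ψ|) ≥ tr(ρ P⁽⁰⁰⁾) + tr(ρ P⁽⁰¹⁾) + tr(ρ P⁽¹⁰⁾) + tr(ρ P⁽¹¹⁾) − 3. -/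
/-!
For commuting orthogonal projections `p`, `q`, the operator `1 - p - q + p q = (1 - p)(1 - q)` is
again a projection, hence positive, so every state `ρ` satisfies the union bound
`tr(ρ p q) ≥ tr(ρ p) + tr(ρ q) - 1`. Applying it to `P⁽ᵃ⁰⁾, P⁽ᵃ¹⁾` for `a = 0, 1` and then to
`P⁽⁰⁾, P⁽¹⁾` gives the theorem.
-/

open Matrix
open scoped BigOperators ComplexOrder MatrixOrder

noncomputable section

theorem IsStarProjection.map_add_le_map_one_add_map_mul {R : Type*} [Ring R] [StarRing R]
    [PartialOrder R] [StarOrderedRing R] (φ : R →+ ℝ) (hφ : Monotone φ) {p q : R}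
    (hp : IsStarProjection p) (hq : IsStarProjection q) (hpq : Commute p q) :
    φ p + φ q ≤ φ 1 + φ (p * q) := by
  have h := hφ (hp.add_sub_mul_of_commute hpq hq).one_sub.nonneg
  simp only [map_zero, map_sub, map_add] at h
  linarith

namespace Matrix

variable {n 𝕜 : Type*} [Fintype n] [RCLike 𝕜]

lemma PosSemidef.trace_mul_nonneg {A B : Matrix n n 𝕜} (hA : A.PosSemidef) (hB : B.PosSemidef) :
    0 ≤ (A * B).trace := by
  classical
  obtain ⟨S, rfl⟩ : ∃ S : Matrix n n 𝕜, A = Sᴴ * S :=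
    ⟨CFC.sqrt A, by
      rw [(CFC.sqrt_nonneg A).posSemidef.isHermitian.eq, CFC.sqrt_mul_sqrt_self A hA.nonneg]⟩
  rw [Matrix.mul_assoc, trace_mul_comm]
  exact (hB.mul_mul_conjTranspose_same S).trace_nonneg

def reTraceMulLeft (ρ : Matrix n n 𝕜) : Matrix n n 𝕜 →+ ℝ where
  toFun X := RCLike.re (ρ * X).trace
  map_zero' := by simp
  map_add' X Y := by simp [Matrix.mul_add]

lemma PosSemidef.monotone_reTraceMulLeft {ρ : Matrix n n 𝕜} (hρ : ρ.PosSemidef) :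
    Monotone ρ.reTraceMulLeft := by
  intro X Y hXY
  have h := (RCLike.nonneg_iff.mp (hρ.trace_mul_nonneg (le_iff.mp hXY))).1
  simp only [Matrix.mul_sub, trace_sub, map_sub, sub_nonneg] at h
  exact h

lemma PosSemidef.re_trace_mul_add_le {ρ p q : Matrix n n 𝕜} (hρ : ρ.PosSemidef)
    (hρtr : ρ.trace = 1) (hp : IsStarProjection p) (hq : IsStarProjection q) (hpq : Commute p q) :
    RCLike.re (ρ * p).trace + RCLike.re (ρ * q).trace ≤ 1 + RCLike.re (ρ * (p * q)).trace := by
  classical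
  simpa [reTraceMulLeft, hρtr] using
    IsStarProjection.map_add_le_map_one_add_map_mul _ hρ.monotone_reTraceMulLeft hp hq hpq

end Matrix

theorem stmt12_general {n : Type*} [Fintype n]
    (P0 P1 P00 P01 P10 P11 : Matrix n n ℂ) (ψ : n → ℂ)
    (hP0 : P0ᴴ = P0) (hP0i : P0 * P0 = P0)
    (hP1 : P1ᴴ = P1) (hP1i : P1 * P1 = P1)
    (hP00 : P00ᴴ = P00) (hP00i : P00 * P00 = P00)
    (hP01 : P01ᴴ = P01) (hP01i : P01 * P01 = P01)
    (hP10 : P10ᴴ = P10) (hP10i : P10 * P10 = P10)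
    (hP11 : P11ᴴ = P11) (hP11i : P11 * P11 = P11)
    (h01 : P0 * P1 = outer ψ ψ) (h10 : P1 * P0 = outer ψ ψ)
    (h0a : P00 * P01 = P0) (h0b : P01 * P00 = P0)
    (h1a : P10 * P11 = P1) (h1b : P11 * P10 = P1)
    (ρ : Matrix n n ℂ) (hρ : ρ.PosSemidef) (hρtr : ρ.trace = 1) :
    (ρ * outer ψ ψ).trace.re ≥
      (ρ * P00).trace.re + (ρ * P01).trace.re + (ρ * P10).trace.re +
        (ρ * P11).trace.re - 3 := by
  have h0 := hρ.re_trace_mul_add_le hρtr ⟨hP00i, hP00⟩ ⟨hP01i, hP01⟩ (h0a.trans h0b.symm)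
  have h1 := hρ.re_trace_mul_add_le hρtr ⟨hP10i, hP10⟩ ⟨hP11i, hP11⟩ (h1a.trans h1b.symm)
  have h := hρ.re_trace_mul_add_le hρtr ⟨hP0i, hP0⟩ ⟨hP1i, hP1⟩ (h01.trans h10.symm)
  rw [h0a] at h0
  rw [h1a] at h1
  rw [h01] at h
  simp only [RCLike.re_to_complex] at h0 h1 h
  linarith

/-- Theorem 2, fidelity form, abstract version:
under the recursive stabilizer relations, for every density operator `ρ`,
`tr(ρ|ψ⟩⟨ψ|) ≥ tr(ρP⁽⁰⁰⁾) + tr(ρP⁽⁰¹⁾) + tr(ρP⁽¹⁰⁾) + tr(ρP⁽¹¹⁾) − 3`. -/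
theorem stmt12 {n : Type*} [Fintype n] [DecidableEq n]
    (P0 P1 P00 P01 P10 P11 : Matrix n n ℂ) (ψ : n → ℂ)
    (hψ : star ψ ⬝ᵥ ψ = 1)
    (hP0 : P0ᴴ = P0) (hP0i : P0 * P0 = P0)
    (hP1 : P1ᴴ = P1) (hP1i : P1 * P1 = P1)
    (hP00 : P00ᴴ = P00) (hP00i : P00 * P00 = P00)
    (hP01 : P01ᴴ = P01) (hP01i : P01 * P01 = P01)
    (hP10 : P10ᴴ = P10) (hP10i : P10 * P10 = P10)
    (hP11 : P11ᴴ = P11) (hP11i : P11 * P11 = P11)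
    (h01 : P0 * P1 = outer ψ ψ) (h10 : P1 * P0 = outer ψ ψ)
    (h0a : P00 * P01 = P0) (h0b : P01 * P00 = P0)
    (h1a : P10 * P11 = P1) (h1b : P11 * P10 = P1)
    (ρ : Matrix n n ℂ) (hρ : ρ.PosSemidef) (hρtr : ρ.trace = 1) :
    (ρ * outer ψ ψ).trace.re ≥
      (ρ * P00).trace.re + (ρ * P01).trace.re + (ρ * P10).trace.re +
        (ρ * P11).trace.re - 3 :=
  stmt12_general P0 P1 P00 P01 P10 P11 ψ hP0 hP0i hP1 hP1i hP00 hP00i hP01 hP01i hP10 hP10i hP11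
    hP11i h01 h10 h0a h0b h1a h1b ρ hρ hρtr
end
end

section
/- (Theorem 3, abstract version) Fix m ≥ 0 and a finite-dimensional complex Hilbert space. Suppose for every binary word u of length at most m we are given an orthogonal projection P⁽ᵘ⁾, such that for every word u of length strictly less than m the sibling relations hold: P⁽ᵘ⁰⁾P⁽ᵘ¹⁾ = P⁽ᵘ¹⁾P⁽ᵘ⁰⁾ = P⁽ᵘ⁾. Then: (i) P⁽∅⁾ = ∏_{u ∈ {0,1}^m} P⁽ᵘ⁾, the product taken in lexicographic order of the words u; and (ii) 𝟙 − P⁽∅⁾ ≤ Σ_{u ∈ {0,1}^m} (𝟙 − P⁽ᵘ⁾) in the Loewner order. -/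
open Matrix
open scoped BigOperators ComplexOrder

noncomputable section

/-- The binary word of length `m` representing `n` (most significant bit first),
so that lexicographic order of words corresponds to numerical order of `n < 2^m`. -/
def wordOf (m n : ℕ) : List Bool :=
  (List.range m).map (fun i => Nat.testBit n (m - 1 - i))

lemma wordOf_succ (m k : ℕ) : wordOf (m+1) k = Nat.testBit k m :: wordOf m k := by
  unfold wordOf
  rw [List.range_succ_eq_map, List.map_cons, List.map_map]
  have h1 : m + 1 - 1 - 0 = m := by omega
  have h2 : ((fun i => Nat.testBit k (m + 1 - 1 - i)) ∘ Nat.succ) =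
      fun i => Nat.testBit k (m - 1 - i) := by
    funext i; simp only [Function.comp]; congr 1; omega
  rw [h1, h2]

lemma wordOf_succ_lt {m k : ℕ} (h : k < 2^m) :
    wordOf (m+1) k = false :: wordOf m k := by
  rw [wordOf_succ, Nat.testBit_eq_false_of_lt h]

lemma wordOf_succ_add {m k : ℕ} (h : k < 2^m) :
    wordOf (m+1) (2^m + k) = true :: wordOf m k := by
  rw [wordOf_succ, Nat.testBit_two_pow_add_eq, Nat.testBit_eq_false_of_lt h]
  congr 1
  unfold wordOf
  apply List.map_congr_left
  intro i hi
  rw [List.mem_range] at hi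
  exact Nat.testBit_two_pow_add_gt (by omega) k

lemma key {n : Type*} [Fintype n] [DecidableEq n] (m : ℕ)
    (P : List Bool → Matrix n n ℂ)
    (hproj : ∀ u : List Bool, u.length ≤ m → (P u)ᴴ = P u ∧ P u * P u = P u)
    (hsib : ∀ u : List Bool, u.length < m →
      P (u ++ [false]) * P (u ++ [true]) = P u ∧
      P (u ++ [true]) * P (u ++ [false]) = P u) :
    P [] = (((List.range (2 ^ m)).map (fun k => P (wordOf m k))).prod) ∧
    ((∑ k ∈ Finset.range (2 ^ m), (1 - P (wordOf m k))) - (1 - P [])).PosSemidef := by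
  induction m generalizing P with
  | zero =>
    constructor
    · simp [wordOf]
    · simp [wordOf]
      exact Matrix.PosSemidef.zero
  | succ m IH =>
    have hproj0 : ∀ u : List Bool, u.length ≤ m →
        (P (false :: u))ᴴ = P (false :: u) ∧
        P (false :: u) * P (false :: u) = P (false :: u) :=
      fun u hu => hproj (false :: u) (by simp; omega)
    have hsib0 : ∀ u : List Bool, u.length < m →
        P (false :: (u ++ [false])) * P (false :: (u ++ [true])) = P (false :: u) ∧
        P (false :: (u ++ [true])) * P (false :: (u ++ [false])) = P (false :: u) :=
      fun u hu => hsib (false :: u) (by simp; omega)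
    have hproj1 : ∀ u : List Bool, u.length ≤ m →
        (P (true :: u))ᴴ = P (true :: u) ∧
        P (true :: u) * P (true :: u) = P (true :: u) :=
      fun u hu => hproj (true :: u) (by simp; omega)
    have hsib1 : ∀ u : List Bool, u.length < m →
        P (true :: (u ++ [false])) * P (true :: (u ++ [true])) = P (true :: u) ∧
        P (true :: (u ++ [true])) * P (true :: (u ++ [false])) = P (true :: u) :=
      fun u hu => hsib (true :: u) (by simp; omega)
    have IH0 := IH (fun u => P (false :: u)) hproj0 hsib0
    have IH1 := IH (fun u => P (true :: u)) hproj1 hsib1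
    have hroot := hsib [] (by simp)
    have h01 : P [false] * P [true] = P [] := hroot.1
    have h10 : P [true] * P [false] = P [] := hroot.2
    have h2 : 2 ^ (m+1) = 2 ^ m + 2 ^ m := by rw [pow_succ, mul_two]
    -- product part
    have hprodF : ((List.range (2^m)).map (fun k => P (wordOf (m+1) k))).prod = P [false] := by
      rw [show ((List.range (2^m)).map (fun k => P (wordOf (m+1) k)))
          = ((List.range (2^m)).map (fun k => P (false :: wordOf m k))) from
        List.map_congr_left (fun k hk => by
          rw [wordOf_succ_lt (List.mem_range.mp hk)])]
      exact IH0.1.symm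
    have hprodT : ((List.range (2^m)).map (fun k => P (wordOf (m+1) (2^m + k)))).prod
        = P [true] := by
      rw [show ((List.range (2^m)).map (fun k => P (wordOf (m+1) (2^m + k))))
          = ((List.range (2^m)).map (fun k => P (true :: wordOf m k))) from
        List.map_congr_left (fun k hk => by
          rw [wordOf_succ_add (List.mem_range.mp hk)])]
      exact IH1.1.symm
    have hprod : P [] = (((List.range (2 ^ (m+1))).map (fun k => P (wordOf (m+1) k))).prod) := by
      rw [h2, List.range_add, List.map_append, List.prod_append, List.map_map]
      rw [show ((fun k => P (wordOf (m+1) k)) ∘ fun x => 2^m + x)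
          = fun k => P (wordOf (m+1) (2^m + k)) from rfl]
      rw [hprodF, hprodT, h01]
    refine ⟨hprod, ?_⟩
    -- PSD part
    have hP00 : P [false] * P [false] = P [false] := (hproj [false] (by simp)).2
    have hP11 : P [true] * P [true] = P [true] := (hproj [true] (by simp)).2
    have hE00 : (1 - P [false]) * (1 - P [false]) = 1 - P [false] := by
      rw [sub_mul, one_mul, mul_sub, mul_one, hP00]; abel
    have hE11 : (1 - P [true]) * (1 - P [true]) = 1 - P [true] := by
      rw [sub_mul, one_mul, mul_sub, mul_one, hP11]; abel
    have hcomm : (1 - P [true]) * (1 - P [false]) = (1 - P [false]) * (1 - P [true]) := by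
      rw [sub_mul, one_mul, mul_sub, mul_one, h10, sub_mul, one_mul, mul_sub, mul_one, h01]
      abel
    have hMherm : ((1 - P [false]) * (1 - P [true]))ᴴ = (1 - P [false]) * (1 - P [true]) := by
      rw [Matrix.conjTranspose_mul, Matrix.conjTranspose_sub, Matrix.conjTranspose_sub,
        Matrix.conjTranspose_one, (hproj [false] (by simp)).1, (hproj [true] (by simp)).1]
      exact hcomm
    have hMidem : ((1 - P [false]) * (1 - P [true])) * ((1 - P [false]) * (1 - P [true]))
        = (1 - P [false]) * (1 - P [true]) := by
      calc ((1 - P [false]) * (1 - P [true])) * ((1 - P [false]) * (1 - P [true]))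
          = (1 - P [false]) * (((1 - P [true]) * (1 - P [false])) * (1 - P [true])) := by
            simp only [mul_assoc]
        _ = (1 - P [false]) * (((1 - P [false]) * (1 - P [true])) * (1 - P [true])) := by
            rw [hcomm]
        _ = (1 - P [false]) * (1 - P [true]) := by
            rw [mul_assoc (1 - P [false]) (1 - P [true]) (1 - P [true]), hE11,
              ← mul_assoc, hE00]
    have hMpsd : ((1 - P [false]) * (1 - P [true])).PosSemidef := by
      have h := Matrix.posSemidef_conjTranspose_mul_self ((1 - P [false]) * (1 - P [true]))
      rwa [hMherm, hMidem] at h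
    have hMeq : (1 - P [false]) * (1 - P [true]) = 1 - P [false] - P [true] + P [] := by
      rw [sub_mul, one_mul, mul_sub, mul_one, h01]; abel
    have hsumF : (∑ k ∈ Finset.range (2^m), (1 - P (wordOf (m+1) k)))
        = ∑ k ∈ Finset.range (2^m), (1 - P (false :: wordOf m k)) :=
      Finset.sum_congr rfl (fun k hk => by
        rw [wordOf_succ_lt (Finset.mem_range.mp hk)])
    have hsumT : (∑ k ∈ Finset.range (2^m), (1 - P (wordOf (m+1) (2^m + k))))
        = ∑ k ∈ Finset.range (2^m), (1 - P (true :: wordOf m k)) :=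
      Finset.sum_congr rfl (fun k hk => by
        rw [wordOf_succ_add (Finset.mem_range.mp hk)])
    rw [h2, Finset.sum_range_add, hsumF, hsumT]
    have hsplit :
        ((∑ k ∈ Finset.range (2^m), (1 - P (false :: wordOf m k)))
          + ∑ k ∈ Finset.range (2^m), (1 - P (true :: wordOf m k))) - (1 - P [])
        = ((∑ k ∈ Finset.range (2^m), (1 - P (false :: wordOf m k))) - (1 - P [false]))
          + ((∑ k ∈ Finset.range (2^m), (1 - P (true :: wordOf m k))) - (1 - P [true]))
          + ((1 - P [false]) * (1 - P [true])) := by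
      rw [hMeq]; abel
    rw [hsplit]
    exact (IH0.2.add IH1.2).add hMpsd

/-- Theorem 3, abstract version: given orthogonal projections
`P⁽ᵘ⁾` for all binary words `u` of length at most `m`, satisfying the sibling
relations `P⁽ᵘ⁰⁾P⁽ᵘ¹⁾ = P⁽ᵘ¹⁾P⁽ᵘ⁰⁾ = P⁽ᵘ⁾` for `|u| < m`, one has
(i) `P⁽∅⁾ = ∏_{u ∈ {0,1}^m} P⁽ᵘ⁾` (lexicographic order), and
(ii) `𝟙 − P⁽∅⁾ ≤ Σ_{u ∈ {0,1}^m} (𝟙 − P⁽ᵘ⁾)` in the Loewner order. -/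
theorem stmt13 {n : Type*} [Fintype n] [DecidableEq n] (m : ℕ)
    (P : List Bool → Matrix n n ℂ)
    (hproj : ∀ u : List Bool, u.length ≤ m → (P u)ᴴ = P u ∧ P u * P u = P u)
    (hsib : ∀ u : List Bool, u.length < m →
      P (u ++ [false]) * P (u ++ [true]) = P u ∧
      P (u ++ [true]) * P (u ++ [false]) = P u) :
    P [] = (((List.range (2 ^ m)).map (fun k => P (wordOf m k))).prod) ∧
    ((∑ k ∈ Finset.range (2 ^ m), (1 - P (wordOf m k))) - (1 - P [])).PosSemidef :=
  key m P hproj hsib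
end
end

section
/- (n-party fidelity bound, abstract version) Fix m ≥ 0 and a finite-dimensional complex Hilbert space. Suppose for every binary word u of length at most m we are given an orthogonal projection P⁽ᵘ⁾, such that for every word u of length strictly less than m: P⁽ᵘ⁰⁾P⁽ᵘ¹⁾ = P⁽ᵘ¹⁾P⁽ᵘ⁰⁾ = P⁽ᵘ⁾. Then for every density operator ρ (positive semidefinite with trace 1), tr(ρ P⁽∅⁾) ≥ Σ_{u ∈ {0,1}^m} tr(ρ P⁽ᵘ⁾) − (2^m − 1). -/
/-! For commuting orthogonal projections `P`, `Q` the operator `(1 - P)(1 - Q) = 1 - P - Q + PQ`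
is again an orthogonal projection, so `tr(ρ(1 - P)(1 - Q)) ≥ 0`, that is
`tr(ρP) + tr(ρQ) ≤ tr(ρPQ) + 1`. Applied at every node `u` of the binary tree, where
`P⁽ᵘ⁰⁾P⁽ᵘ¹⁾ = P⁽ᵘ⁾`, this replaces the `2^(j+1)` terms of level `j + 1` by the `2^j` terms of
level `j` at a cost of `2^j`; the costs over all levels add up to `2^m - 1`. -/

open Matrix
open scoped BigOperators ComplexOrder

noncomputable section

namespace Matrix

variable {n R : Type*} [Fintype n] [CommRing R] [PartialOrder R] [StarRing R] [StarOrderedRing R]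

theorem PosSemidef.trace_mul_nonneg_of_isStarProjection {ρ M : Matrix n n R}
    (hρ : ρ.PosSemidef) (hM : IsStarProjection M) : 0 ≤ (ρ * M).trace := by
  have hMH : Mᴴ = M := hM.isSelfAdjoint
  calc (0 : R) ≤ (Mᴴ * ρ * M).trace := (hρ.conjTranspose_mul_mul_same M).trace_nonneg
    _ = (ρ * M).trace := by
      rw [hMH, trace_mul_comm, ← mul_assoc, hM.isIdempotentElem.eq, trace_mul_comm]

theorem PosSemidef.trace_mul_add_trace_mul_le {ρ P Q : Matrix n n R}
    (hρ : ρ.PosSemidef) (hP : IsStarProjection P) (hQ : IsStarProjection Q)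
    (hPQ : Commute P Q) :
    (ρ * P).trace + (ρ * Q).trace ≤ (ρ * (P * Q)).trace + ρ.trace := by
  classical
  have h := hρ.trace_mul_nonneg_of_isStarProjection
    (hP.one_sub.mul hQ.one_sub ((Commute.one_left _).sub_left ((Commute.one_right P).sub_right hPQ)))
  rw [← sub_nonneg]
  convert h using 1
  simp only [sub_mul, mul_sub, one_mul, mul_one, trace_sub]
  abel

end Matrix

theorem wordOf_length (j k : ℕ) : (wordOf j k).length = j := by
  simp [wordOf]

theorem wordOf_succ_s14 (j k : ℕ) : wordOf (j + 1) k = wordOf j (k / 2) ++ [k.testBit 0] := by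
  simp only [wordOf, List.range_succ, List.map_append, List.map_singleton, Nat.add_sub_cancel,
    Nat.sub_self]
  congr 1
  refine List.map_congr_left fun i hi => ?_
  rw [List.mem_range] at hi
  rw [show j - i = (j - 1 - i) + 1 by omega, Nat.testBit_add_one]

theorem Finset.sum_range_two_mul {M : Type*} [AddCommMonoid M] (N : ℕ) (f : ℕ → M) :
    ∑ k ∈ range (2 * N), f k = ∑ q ∈ range N, (f (2 * q) + f (2 * q + 1)) := by
  induction N with
  | zero => simp
  | succ N ih =>
    rw [Nat.mul_succ, sum_range_succ, sum_range_succ, sum_range_succ, ih, add_assoc]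

theorem sum_range_wordOf_succ {M : Type*} [AddCommMonoid M] (f : List Bool → M) (j : ℕ) :
    ∑ k ∈ Finset.range (2 ^ (j + 1)), f (wordOf (j + 1) k) =
      ∑ q ∈ Finset.range (2 ^ j), (f (wordOf j q ++ [false]) + f (wordOf j q ++ [true])) := by
  rw [pow_succ', Finset.sum_range_two_mul]
  simp [wordOf_succ_s14, Nat.testBit_zero, Nat.mul_add_div]

theorem sum_range_wordOf_le {f : List Bool → ℝ} {m : ℕ}
    (hf : ∀ u : List Bool, u.length < m → f (u ++ [false]) + f (u ++ [true]) ≤ f u + 1)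
    {j : ℕ} (hj : j ≤ m) :
    ∑ k ∈ Finset.range (2 ^ j), f (wordOf j k) ≤ f [] + (2 ^ j - 1) := by
  induction j with
  | zero => simp [wordOf]
  | succ j ih =>
    have hchildren : ∀ q ∈ Finset.range (2 ^ j),
        f (wordOf j q ++ [false]) + f (wordOf j q ++ [true]) ≤ f (wordOf j q) + 1 :=
      fun q _ => hf _ (by rw [wordOf_length]; omega)
    calc ∑ k ∈ Finset.range (2 ^ (j + 1)), f (wordOf (j + 1) k)
        ≤ ∑ q ∈ Finset.range (2 ^ j), (f (wordOf j q) + 1) := by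
          rw [sum_range_wordOf_succ]; exact Finset.sum_le_sum hchildren
      _ = ∑ q ∈ Finset.range (2 ^ j), f (wordOf j q) + 2 ^ j := by
          simp [Finset.sum_add_distrib]
      _ ≤ f [] + (2 ^ (j + 1) - 1) := by
          linarith [ih (by omega), pow_succ (2 : ℝ) j]

theorem stmt14_general {n : Type*} [Fintype n] (m : ℕ)
    (P : List Bool → Matrix n n ℂ)
    (hproj : ∀ u : List Bool, u.length ≤ m → (P u)ᴴ = P u ∧ P u * P u = P u)
    (hsib : ∀ u : List Bool, u.length < m →
      P (u ++ [false]) * P (u ++ [true]) = P u ∧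
      P (u ++ [true]) * P (u ++ [false]) = P u)
    (ρ : Matrix n n ℂ) (hρ : ρ.PosSemidef) (hρtr : ρ.trace = 1) :
    (ρ * P []).trace.re ≥
      (∑ k ∈ Finset.range (2 ^ m), (ρ * P (wordOf m k)).trace.re)
        - ((2 ^ m : ℝ) - 1) := by
  have hchildren : ∀ u : List Bool, u.length < m →
      (ρ * P (u ++ [false])).trace.re + (ρ * P (u ++ [true])).trace.re
        ≤ (ρ * P u).trace.re + 1 := by
    intro u hu
    obtain ⟨h01, h10⟩ := hsib u hu
    have hchild (b : Bool) : IsStarProjection (P (u ++ [b])) :=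
      have ⟨hH, hI⟩ := hproj _ (by simp; omega)
      ⟨hI, hH⟩
    have h := hρ.trace_mul_add_trace_mul_le (hchild false) (hchild true) (h01.trans h10.symm)
    rw [h01, hρtr] at h
    simpa using (Complex.le_def.mp h).1
  linarith [sum_range_wordOf_le (f := fun u => (ρ * P u).trace.re) hchildren le_rfl]

/-- n-party fidelity bound, abstract version: given orthogonal
projections `P⁽ᵘ⁾` for all binary words `u` of length at most `m` with the sibling
relations, for every density operator `ρ`,
`tr(ρP⁽∅⁾) ≥ Σ_{u ∈ {0,1}^m} tr(ρP⁽ᵘ⁾) − (2^m − 1)`. -/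
theorem stmt14 {n : Type*} [Fintype n] [DecidableEq n] (m : ℕ)
    (P : List Bool → Matrix n n ℂ)
    (hproj : ∀ u : List Bool, u.length ≤ m → (P u)ᴴ = P u ∧ P u * P u = P u)
    (hsib : ∀ u : List Bool, u.length < m →
      P (u ++ [false]) * P (u ++ [true]) = P u ∧
      P (u ++ [true]) * P (u ++ [false]) = P u)
    (ρ : Matrix n n ℂ) (hρ : ρ.PosSemidef) (hρtr : ρ.trace = 1) :
    (ρ * P []).trace.re ≥
      (∑ k ∈ Finset.range (2 ^ m), (ρ * P (wordOf m k)).trace.re)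
        - ((2 ^ m : ℝ) - 1) :=
  stmt14_general m P hproj hsib ρ hρ hρtr
end
end
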